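/- Mirror Descent main inequality: Let f : X → ℝ be convex and subdifferentiable on the convex set X, let d be a 1-strongly convex d.g.f. with Bregman divergence V, and for h > 0 define x⁺ = Mirr_x(h∇f(x)) = argmin_{u ∈ X} {⟨h∇f(x), u⟩ + V(x, u)}. Then for every y ∈ X: h⟨∇f(x), x - y⟩ ≤ (h²/2)‖∇f(x)‖*² + V(x, y) - V(x⁺, y). -/

import Mathlib

/-!
At the minimiser `x⁺` of `u ↦ h⟨∇f(x), u⟩ + V(x, u)` the first-order condition gives
`h⟨∇f(x), x⁺ - y⟩ ≤ ⟨∇d(x) - ∇d(x⁺), x⁺ - y⟩`, and the three-point identity turns the right-hand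
side into `V(x, y) - V(x⁺, y) - V(x, x⁺)`. The remaining term `h⟨∇f(x), x - x⁺⟩ - V(x, x⁺)` is at
most `h²‖∇f(x)‖*²/2`, because strong convexity gives `V(x, x⁺) ≥ ‖x⁺ - x‖²/2`.
-/

/-- Bregman divergence `V(x,y) = d y - d x - ⟨∇d x, y - x⟩`. -/
def bregman {E : Type*} [NormedAddCommGroup E] [NormedSpace ℝ E]
    (d : E → ℝ) (Gd : E → E →L[ℝ] ℝ) (x y : E) : ℝ :=
  d y - d x - Gd x (y - x)

open Set

section

variable {E : Type*} [NormedAddCommGroup E] [NormedSpace ℝ E]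

theorem mul_apply_le_sq_opNorm_add_sq_norm (g : E →L[ℝ] ℝ) (h : ℝ) (v : E) :
    h * g v ≤ h ^ 2 / 2 * ‖g‖ ^ 2 + ‖v‖ ^ 2 / 2 := by
  have hcs : |g v| ≤ ‖g‖ * ‖v‖ := g.le_opNorm v
  have hmul : h * g v ≤ |h| * (‖g‖ * ‖v‖) := by
    calc h * g v ≤ |h * g v| := le_abs_self _
      _ = |h| * |g v| := abs_mul h (g v)
      _ ≤ |h| * (‖g‖ * ‖v‖) := mul_le_mul_of_nonneg_left hcs (abs_nonneg h)
  nlinarith [sq_nonneg (|h| * ‖g‖ - ‖v‖), sq_abs h]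

theorem bregman_three_point (d : E → ℝ) (Gd : E → E →L[ℝ] ℝ) (x xp y : E) :
    (Gd x - Gd xp) (xp - y) = bregman d Gd x y - bregman d Gd xp y - bregman d Gd x xp := by
  have hsplit : Gd x (y - x) = Gd x (y - xp) + Gd x (xp - x) := by
    rw [← map_add, sub_add_sub_cancel]
  simp only [bregman, sub_apply, hsplit, ← neg_sub y xp, map_neg]
  ring

theorem le_sub_apply_of_strongMonotone {X : Set E} {Gd : E → E →L[ℝ] ℝ}
    (hstrong : ∀ x ∈ X, ∀ y ∈ X, (Gd x - Gd y) (x - y) ≥ ‖x - y‖ ^ 2)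
    {a v : E} (ha : a ∈ X) {t : ℝ} (ht : 0 ≤ t) (hat : a + t • v ∈ X) :
    t * ‖v‖ ^ 2 ≤ Gd (a + t • v) v - Gd a v := by
  rcases ht.eq_or_lt with rfl | ht
  · simp
  have hmono := hstrong _ hat a ha
  rw [add_sub_cancel_left, norm_smul, Real.norm_of_nonneg ht.le, map_smul, smul_eq_mul,
    sub_apply] at hmono
  nlinarith

/-- Along the segment from `a` to `b`, `t ↦ d(a + t(b - a)) - t⟨∇d(a), b - a⟩ - t²‖b - a‖²/2`
has nonnegative derivative by strong monotonicity of `∇d`; comparing its values at `0` and `1`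
gives the bound. -/
theorem sq_norm_sub_div_two_le_bregman {X : Set E} (hX : Convex ℝ X)
    {d : E → ℝ} {Gd : E → E →L[ℝ] ℝ}
    (hddiff : ∀ x ∈ X, HasFDerivWithinAt d (Gd x) X x)
    (hstrong : ∀ x ∈ X, ∀ y ∈ X, (Gd x - Gd y) (x - y) ≥ ‖x - y‖ ^ 2)
    {a b : E} (ha : a ∈ X) (hb : b ∈ X) :
    ‖b - a‖ ^ 2 / 2 ≤ bregman d Gd a b := by
  set v := b - a
  set γ : ℝ → E := fun t => a + t • v
  have hmaps : MapsTo γ (Icc 0 1) X := fun t ht => by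
    simpa [γ, v] using hX.add_smul_sub_mem ha hb ht
  set g : ℝ → ℝ := fun t => d (γ t) - t * Gd a v - t ^ 2 / 2 * ‖v‖ ^ 2
  have hg_deriv : ∀ t ∈ Icc (0 : ℝ) 1,
      HasDerivWithinAt g (Gd (γ t) v - Gd a v - t * ‖v‖ ^ 2) (Icc 0 1) t := by
    intro t ht
    have hγ : HasDerivAt γ v t :=
      (((hasDerivAt_id' t).smul_const v).const_add a).congr_deriv (one_smul ℝ v)
    have hdγ := (hddiff (γ t) (hmaps ht)).comp_hasDerivWithinAt t hγ.hasDerivWithinAt hmaps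
    have hlin : HasDerivAt (fun t : ℝ => t * Gd a v) (Gd a v) t := by
      simpa using (hasDerivAt_id t).mul_const (Gd a v)
    have hquad : HasDerivAt (fun t : ℝ => t ^ 2 / 2 * ‖v‖ ^ 2) (t * ‖v‖ ^ 2) t :=
      (((hasDerivAt_pow 2 t).div_const 2).mul_const (‖v‖ ^ 2)).congr_deriv (by norm_num)
    exact (hdγ.sub hlin.hasDerivWithinAt).sub hquad.hasDerivWithinAt
  have hg_mono : MonotoneOn g (Icc 0 1) :=
    monotoneOn_of_hasDerivWithinAt_nonneg (convex_Icc 0 1)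
      (fun t ht => (hg_deriv t ht).continuousWithinAt)
      (fun t ht => (hg_deriv t (interior_subset ht)).mono interior_subset)
      (fun t ht => sub_nonneg.2 <|
        le_sub_apply_of_strongMonotone hstrong ha (interior_subset ht).1
          (hmaps (interior_subset ht)))
  have hg01 := hg_mono (left_mem_Icc.2 zero_le_one) (right_mem_Icc.2 zero_le_one) zero_le_one
  simp only [g, γ, v, zero_smul, one_smul, add_zero, add_sub_cancel] at hg01
  simp only [bregman]
  linarith

theorem apply_sub_le_of_isMinOn_add_bregman {X : Set E} (hX : Convex ℝ X)
    {d : E → ℝ} {Gd : E → E →L[ℝ] ℝ} (g : E →L[ℝ] ℝ) {x xp y : E} (hxp : xp ∈ X)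
    (hd : HasFDerivWithinAt d (Gd xp) X xp)
    (hmin : IsMinOn (fun u => g u + bregman d Gd x u) X xp) (hy : y ∈ X) :
    g (xp - y) ≤ (Gd x - Gd xp) (xp - y) := by
  have hF : HasFDerivWithinAt (fun u => g u + bregman d Gd x u) (g + (Gd xp - Gd x)) X xp := by
    have hV : HasFDerivWithinAt (fun u => d u - d x - Gd x (u - x)) (Gd xp - Gd x) X xp :=
      (hd.sub_const (d x)).sub
        (((Gd x).hasFDerivAt.comp xp (hasFDerivAt_sub_const x)).congr_fderiv
          (Gd x).comp_id).hasFDerivWithinAt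
    exact g.hasFDerivWithinAt.add hV
  have hopt : 0 ≤ (g + (Gd xp - Gd x)) (y - xp) :=
    hmin.localize.hasFDerivWithinAt_nonneg hF
      (sub_mem_posTangentConeAt_of_segment_subset (hX.segment_subset hxp hy))
  rw [← neg_sub xp y, map_neg, neg_nonneg] at hopt
  simp only [add_apply, sub_apply] at hopt ⊢
  linarith

end

theorem mirror_descent_main_inequality_general
    {E : Type*} [NormedAddCommGroup E] [NormedSpace ℝ E]
    (X : Set E) (hX : Convex ℝ X)
    (d : E → ℝ) (Gd : E → E →L[ℝ] ℝ)
    (hddiff : ∀ x ∈ X, HasFDerivWithinAt d (Gd x) X x)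
    (hstrong : ∀ x ∈ X, ∀ y ∈ X, (Gd x - Gd y) (x - y) ≥ ‖x - y‖ ^ 2)
    (Gf : E → E →L[ℝ] ℝ)
    (h : ℝ)
    (x xp : E) (hx : x ∈ X) (hxp : xp ∈ X)
    (hmin : ∀ u ∈ X, h * Gf x xp + bregman d Gd x xp ≤ h * Gf x u + bregman d Gd x u)
    (y : E) (hy : y ∈ X) :
    h * Gf x (x - y) ≤ h ^ 2 / 2 * ‖Gf x‖ ^ 2 + bregman d Gd x y - bregman d Gd xp y := by
  have hopt : h * Gf x (xp - y) ≤ (Gd x - Gd xp) (xp - y) :=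
    apply_sub_le_of_isMinOn_add_bregman hX (h • Gf x) hxp (hddiff xp hxp)
      (fun u hu => by simpa using hmin u hu) hy
  rw [bregman_three_point] at hopt
  have hbreg := sq_norm_sub_div_two_le_bregman hX hddiff hstrong hx hxp
  have hyoung := mul_apply_le_sq_opNorm_add_sq_norm (Gf x) h (x - xp)
  rw [norm_sub_rev] at hyoung
  have hsplit : Gf x (x - y) = Gf x (x - xp) + Gf x (xp - y) := by
    rw [← map_add, sub_add_sub_cancel]
  rw [hsplit]
  linarith

/-- Mirror Descent main inequality. If
`x⁺ = argmin_{u ∈ X} { ⟨h ∇f(x), u⟩ + V(x,u) }`, then for every `y ∈ X`: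
`h ⟨∇f(x), x - y⟩ ≤ (h²/2)‖∇f(x)‖² + V(x,y) - V(x⁺,y)`. -/
theorem mirror_descent_main_inequality
    {E : Type*} [NormedAddCommGroup E] [NormedSpace ℝ E] [FiniteDimensional ℝ E]
    (X : Set E) (hX : Convex ℝ X) (hXcl : IsClosed X)
    (d : E → ℝ) (Gd : E → E →L[ℝ] ℝ)
    (hddiff : ∀ x ∈ X, HasFDerivWithinAt d (Gd x) X x)
    (hstrong : ∀ x ∈ X, ∀ y ∈ X, (Gd x - Gd y) (x - y) ≥ ‖x - y‖ ^ 2)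
    (f : E → ℝ) (Gf : E → E →L[ℝ] ℝ)
    (hsub : ∀ x ∈ X, ∀ y ∈ X, f y ≥ f x + Gf x (y - x))
    (h : ℝ) (hh : 0 < h)
    (x xp : E) (hx : x ∈ X) (hxp : xp ∈ X)
    (hmin : ∀ u ∈ X, h * Gf x xp + bregman d Gd x xp ≤ h * Gf x u + bregman d Gd x u)
    (y : E) (hy : y ∈ X) :
    h * Gf x (x - y) ≤ h ^ 2 / 2 * ‖Gf x‖ ^ 2 + bregman d Gd x y - bregman d Gd xp y :=
  mirror_descent_main_inequality_general X hX d Gd hddiff hstrong Gf h x xp hx hxp hmin y hy
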